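/- arXiv:2403.06920 — 2 statements merged into one kernel-verified Lean document; each statement's English description precedes it below -/
import Mathlib

section
/- Under the stated setting, lim_{k→∞} E[V(k)] = 0; consequently, for every i ∈ {1,…,N}, lim_{k→∞} E[(x_i(k) − (1/N)𝟙ᵀx(k))²] = 0, i.e., the multi-agent system achieves weak consensus (Theorem 1). -/
/-!
Write `u = (I - J) x` for the deviation from the average. Since `L` annihilates constant
vectors, `u(k+1) = (I - J)((I - α L) u(k) + α w(k))`. The projection `I - J` does not increase
the norm, the noise `w(k)` is orthogonal in `L²` to the `ℱ_k`-measurable vector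
`(I - α L) u(k)`, and the spectral gap gives `‖(I - α L) u‖² ≤ (1 - 2λα + Cα²) ‖u‖²` with `C`
the squared Frobenius norm of `L`. Hence
`E V(k+1) ≤ (1 - 2λα(k) + Cα(k)²) E V(k) + α(k)² M`, and once `Cα(k) ≤ λ` this is a
contraction by `1 - λα(k)` perturbed by the summable `α(k)² M`; as `∑ α(k) = ∞`, the products
`∏ (1 - λα(k)) ≤ exp (-λ ∑ α(k))` vanish and `E V(k) → 0`.
-/

open MeasureTheory Filter Matrix Finset Topology

theorem le_exp_neg_sum_mul_add_sum_of_le_one_sub_mul_add {a b V : ℕ → ℝ} {m : ℕ}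
    (ha0 : ∀ k, 0 ≤ a k) (hb0 : ∀ k, 0 ≤ b k) (hV0 : ∀ k, 0 ≤ V k)
    (hV : ∀ k, m ≤ k → V (k + 1) ≤ (1 - a k) * V k + b k) {n : ℕ} (hmn : m ≤ n) :
    V n ≤ Real.exp (-∑ k ∈ Ico m n, a k) * V m + ∑ k ∈ Ico m n, b k := by
  induction n, hmn using Nat.le_induction with
  | base => simp
  | succ n hmn ih =>
    have hS : 0 ≤ ∑ k ∈ Ico m n, b k := sum_nonneg fun k _ => hb0 k
    have hE : 0 ≤ Real.exp (-∑ k ∈ Ico m n, a k) * V m := mul_nonneg (Real.exp_nonneg _) (hV0 m)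
    have hexp_le : Real.exp (-a n) ≤ 1 := Real.exp_le_one_iff.2 (neg_nonpos.2 (ha0 n))
    rw [sum_Ico_succ_top hmn, sum_Ico_succ_top hmn, neg_add, Real.exp_add]
    calc V (n + 1) ≤ (1 - a n) * V n + b n := hV n hmn
      _ ≤ Real.exp (-a n) * V n + b n := by
        gcongr
        · exact hV0 n
        · linarith [Real.add_one_le_exp (-a n)]
      _ ≤ Real.exp (-a n) * (Real.exp (-∑ k ∈ Ico m n, a k) * V m + ∑ k ∈ Ico m n, b k)
          + b n := by gcongr
      _ ≤ _ := by nlinarith [Real.exp_pos (-a n)]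

theorem tendsto_zero_of_le_one_sub_mul_add {a b V : ℕ → ℝ} (ha0 : ∀ k, 0 ≤ a k)
    (ha : Tendsto (fun n => ∑ k ∈ range n, a k) atTop atTop) (hb0 : ∀ k, 0 ≤ b k)
    (hb : Summable b) (hV0 : ∀ k, 0 ≤ V k)
    (hV : ∀ᶠ k in atTop, V (k + 1) ≤ (1 - a k) * V k + b k) :
    Tendsto V atTop (𝓝 0) := by
  obtain ⟨K, hK⟩ := eventually_atTop.1 hV
  refine tendsto_order.2 ⟨fun ε hε => Eventually.of_forall fun n => hε.trans_le (hV0 n),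
    fun ε hε => ?_⟩
  -- `exp (-∑_{m ≤ k < n} a k)` has pushed the contribution of `V m` below `ε/2`.
  have htail : Tendsto (fun m => ∑' k, b k - ∑ k ∈ range m, b k) atTop (𝓝 0) := by
    simpa using (tendsto_const_nhds (x := ∑' k, b k)).sub hb.hasSum.tendsto_sum_nat
  obtain ⟨m, hmK, hm⟩ := ((eventually_ge_atTop K).and
    (htail.eventually_lt_const (half_pos hε))).exists
  have hexp : Tendsto (fun n => Real.exp (-∑ k ∈ Ico m n, a k) * V m) atTop (𝓝 0) := by
    have hIco : Tendsto (fun n => ∑ k ∈ Ico m n, a k) atTop atTop :=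
      (tendsto_atTop_add_const_right _ (-∑ k ∈ range m, a k) ha).congr'
        ((eventually_ge_atTop m).mono fun n hn => by
          simp only [sum_Ico_eq_sub _ hn, sub_eq_add_neg])
    simpa using (Real.tendsto_exp_neg_atTop_nhds_zero.comp hIco).mul_const (V m)
  filter_upwards [eventually_ge_atTop m, hexp.eventually_lt_const (half_pos hε)]
    with n hmn hn
  have hbn : ∑ k ∈ Ico m n, b k ≤ ∑' k, b k - ∑ k ∈ range m, b k := by
    rw [sum_Ico_eq_sub _ hmn]
    linarith [hb.sum_le_tsum (range n) fun k _ => hb0 k]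
  have := le_exp_neg_sum_mul_add_sum_of_le_one_sub_mul_add ha0 hb0 hV0
    (fun k hk => hK k (hmK.trans hk)) hmn
  linarith

theorem tendsto_zero_of_le_one_sub_two_mul_add_sq {lam C M : ℝ} {α V : ℕ → ℝ} (hlam : 0 < lam)
    (hM : 0 ≤ M) (hα0 : ∀ k, 0 ≤ α k)
    (hα : Tendsto (fun n => ∑ k ∈ range n, α k) atTop atTop)
    (hα_sq : Summable fun k => α k ^ 2) (hV0 : ∀ k, 0 ≤ V k)
    (hV : ∀ k, V (k + 1) ≤ (1 - 2 * lam * α k + C * α k ^ 2) * V k + α k ^ 2 * M) :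
    Tendsto V atTop (𝓝 0) := by
  have hα_lim : Tendsto α atTop (𝓝 0) := by
    simpa [Function.comp_def, Real.sqrt_sq (hα0 _)] using
      (Real.continuous_sqrt.tendsto 0).comp hα_sq.tendsto_atTop_zero
  have hCα : ∀ᶠ k in atTop, C * α k < lam :=
    (hα_lim.const_mul C).eventually_lt_const (by rwa [mul_zero])
  refine tendsto_zero_of_le_one_sub_mul_add (a := fun k => lam * α k)
    (fun k => mul_nonneg hlam.le (hα0 k)) (by simpa [← mul_sum] using hα.const_mul_atTop hlam)
    (fun k => mul_nonneg (sq_nonneg _) hM) (hα_sq.mul_right M) hV0 ?_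
  filter_upwards [hCα] with k hk
  have : 0 ≤ α k * (lam - C * α k) * V k :=
    mul_nonneg (mul_nonneg (hα0 k) (by linarith)) (hV0 k)
  linarith [hV k]

section SpectralGap

variable {n : Type*} [Fintype n]

theorem sum_sq_mulVec_le (L : Matrix n n ℝ) (v : n → ℝ) :
    ∑ i, (L *ᵥ v) i ^ 2 ≤ (∑ i, ∑ j, L i j ^ 2) * ∑ j, v j ^ 2 := by
  rw [sum_mul]
  exact sum_le_sum fun i _ => sum_mul_sq_le_sq_mul_sq univ (L i) v

theorem sum_sq_one_sub_smul_mulVec_le [DecidableEq n] {L : Matrix n n ℝ} {v : n → ℝ} {lam C a : ℝ}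
    (ha : 0 ≤ a) (hgap : lam * ∑ i, v i ^ 2 ≤ v ⬝ᵥ L *ᵥ v)
    (hC : ∑ i, (L *ᵥ v) i ^ 2 ≤ C * ∑ i, v i ^ 2) :
    ∑ i, ((1 - a • L) *ᵥ v) i ^ 2 ≤ (1 - 2 * lam * a + C * a ^ 2) * ∑ i, v i ^ 2 := by
  have hexpand : ∑ i, ((1 - a • L) *ᵥ v) i ^ 2
      = ∑ i, v i ^ 2 - 2 * a * (v ⬝ᵥ L *ᵥ v) + a ^ 2 * ∑ i, (L *ᵥ v) i ^ 2 := by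
    simp only [sub_mulVec, one_mulVec, smul_mulVec, Pi.sub_apply, Pi.smul_apply, smul_eq_mul,
      dotProduct, mul_sum, ← sum_sub_distrib, ← sum_add_distrib]
    exact sum_congr rfl fun i _ => by ring
  rw [hexpand]
  nlinarith [mul_le_mul_of_nonneg_left hgap ha, mul_le_mul_of_nonneg_left hC (sq_nonneg a)]

end SpectralGap

noncomputable def averagingMatrix (N : ℕ) : Matrix (Fin N) (Fin N) ℝ := of fun _ _ => (N : ℝ)⁻¹

section Averaging

variable {N : ℕ}

theorem mul_averagingMatrix_eq_zero {L : Matrix (Fin N) (Fin N) ℝ}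
    (hL1 : L *ᵥ (fun _ => (1 : ℝ)) = 0) : L * averagingMatrix N = 0 := by
  ext i j
  have := congrFun hL1 i
  simp_all [averagingMatrix, mul_apply, mulVec, dotProduct, ← sum_mul]

namespace averagingMatrix

theorem one_sub_mulVec_apply (v : Fin N → ℝ) (i : Fin N) :
    ((1 - averagingMatrix N) *ᵥ v) i = v i - (∑ j, v j) / N := by
  rw [sub_mulVec, one_mulVec]
  simp [averagingMatrix, mulVec, dotProduct, ← mul_sum, div_eq_inv_mul]

theorem sum_one_sub_mulVec (v : Fin N → ℝ) : ∑ i, ((1 - averagingMatrix N) *ᵥ v) i = 0 := by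
  rcases eq_or_ne N 0 with rfl | hN
  · simp
  · have hN' : (N : ℝ) ≠ 0 := Nat.cast_ne_zero.2 hN
    simp [one_sub_mulVec_apply, sum_sub_distrib, mul_div_cancel₀ _ hN']

theorem sum_sq_one_sub_mulVec_le (v : Fin N → ℝ) :
    ∑ i, ((1 - averagingMatrix N) *ᵥ v) i ^ 2 ≤ ∑ i, v i ^ 2 := by
  set d := (1 - averagingMatrix N) *ᵥ v
  set c := (∑ j, v j) / N
  have hv : ∑ i, v i ^ 2 = ∑ i, d i ^ 2 + 2 * c * ∑ i, d i + N * c ^ 2 := by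
    have hvi : ∀ i, v i = d i + c := fun i => by simp [d, c, one_sub_mulVec_apply]
    simp only [hvi, add_sq, sum_add_distrib, ← sum_mul, ← mul_sum, sum_const, card_univ,
      Fintype.card_fin, nsmul_eq_mul]
    ring
  rw [hv, sum_one_sub_mulVec]
  nlinarith [sq_nonneg c, (Nat.cast_nonneg N : (0 : ℝ) ≤ N)]

theorem one_sub_mul_self : (1 - averagingMatrix N) * averagingMatrix N = 0 := by
  ext i j
  have hN : (N : ℝ) ≠ 0 := Nat.cast_ne_zero.2 i.pos.ne'
  rw [sub_mul, one_mul]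
  simp [averagingMatrix, mul_apply, hN]

-- `I - αL` fixes the average part `J x`, since `L` annihilates constant vectors.
theorem one_sub_mulVec_update {L : Matrix (Fin N) (Fin N) ℝ}
    (hL1 : L *ᵥ (fun _ => (1 : ℝ)) = 0) (a : ℝ) (x w : Fin N → ℝ) :
    (1 - averagingMatrix N) *ᵥ ((1 - a • L) *ᵥ x + a • w)
      = (1 - averagingMatrix N) *ᵥ ((1 - a • L) *ᵥ ((1 - averagingMatrix N) *ᵥ x) + a • w) := by
  have : (1 - averagingMatrix N) * (1 - a • L) * (1 - averagingMatrix N)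
      = (1 - averagingMatrix N) * (1 - a • L) := by
    have hfix : (1 - a • L) * averagingMatrix N = averagingMatrix N := by
      rw [sub_mul, one_mul, smul_mul_assoc, mul_averagingMatrix_eq_zero hL1, smul_zero, sub_zero]
    rw [mul_sub, mul_one, mul_assoc (1 - averagingMatrix N), hfix, one_sub_mul_self, sub_zero]
  rw [mulVec_add, mulVec_add, mulVec_mulVec, mulVec_mulVec, mulVec_mulVec, this]

end averagingMatrix

end Averaging

namespace MeasureTheory.MemLp

variable {Ω : Type*} {m₀ : MeasurableSpace Ω} {μ : Measure Ω} {ι : Type*} [Fintype ι]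

theorem integrable_sum_sq {F : Ω → ι → ℝ} (hF : MemLp F 2 μ) :
    Integrable (fun ω => ∑ i, F ω i ^ 2) μ :=
  integrable_finsetSum _ fun i _ => (hF.eval i).integrable_sq

theorem matrix_mulVec [DecidableEq ι] {p : ENNReal} (A : Matrix ι ι ℝ) {f : Ω → ι → ℝ}
    (hf : MemLp f p μ) : MemLp (fun ω => A *ᵥ f ω) p μ :=
  (LinearMap.toContinuousLinearMap (Matrix.toLin' A)).comp_memLp' hf

end MeasureTheory.MemLp

section Orthogonality

variable {Ω : Type*} {m m₀ : MeasurableSpace Ω} {μ : Measure Ω} [IsFiniteMeasure μ]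

theorem integral_mul_eq_zero_of_condExp_eq_zero (hm : m ≤ m₀) {f g : Ω → ℝ}
    (hf : StronglyMeasurable[m] f) (hfg : Integrable (f * g) μ) (hg : Integrable g μ)
    (hgc : μ[g | m] =ᵐ[μ] 0) : ∫ ω, f ω * g ω ∂μ = 0 := by
  have hpull : μ[f * g | m] =ᵐ[μ] 0 := by
    filter_upwards [condExp_mul_of_stronglyMeasurable_left hf hfg hg, hgc] with ω h h0
    simp [h, h0]
  simpa using (integral_condExp hm (f := f * g)).symm.trans (integral_congr_ae hpull)

theorem integral_add_mul_sq_of_condExp_eq_zero (hm : m ≤ m₀) {f g : Ω → ℝ}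
    (hf : StronglyMeasurable[m] f) (hf2 : MemLp f 2 μ) (hg2 : MemLp g 2 μ)
    (hgc : μ[g | m] =ᵐ[μ] 0) (a : ℝ) :
    ∫ ω, (f ω + a * g ω) ^ 2 ∂μ = ∫ ω, f ω ^ 2 ∂μ + a ^ 2 * ∫ ω, g ω ^ 2 ∂μ := by
  have hfg : Integrable (f * g) μ := hf2.integrable_mul hg2
  have hcross := integral_mul_eq_zero_of_condExp_eq_zero hm hf hfg (hg2.integrable one_le_two) hgc
  have hexpand : (fun ω => (f ω + a * g ω) ^ 2)
      = fun ω => f ω ^ 2 + (2 * a * (f ω * g ω) + a ^ 2 * g ω ^ 2) := by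
    funext ω; ring
  have hcross_int : Integrable (fun ω => 2 * a * (f ω * g ω)) μ := hfg.const_mul _
  have hg_int : Integrable (fun ω => a ^ 2 * g ω ^ 2) μ := hg2.integrable_sq.const_mul _
  rw [hexpand, integral_add hf2.integrable_sq (hcross_int.fun_add hg_int),
    integral_add hcross_int hg_int, integral_const_mul, integral_const_mul, hcross, mul_zero,
    zero_add]

variable {ι : Type*} [Fintype ι]

theorem integral_sum_add_mul_sq_of_condExp_eq_zero (hm : m ≤ m₀) {F w : Ω → ι → ℝ}
    (hF : Measurable[m] F) (hF2 : MemLp F 2 μ) (hw2 : MemLp w 2 μ)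
    (hwc : ∀ i, μ[fun ω => w ω i | m] =ᵐ[μ] 0) (a : ℝ) :
    ∫ ω, ∑ i, (F ω i + a * w ω i) ^ 2 ∂μ
      = ∫ ω, ∑ i, F ω i ^ 2 ∂μ + a ^ 2 * ∫ ω, ∑ i, w ω i ^ 2 ∂μ := by
  have hFw2 : ∀ i, MemLp (fun ω => F ω i + a * w ω i) 2 μ :=
    fun i => (hF2.eval i).add ((hw2.eval i).const_mul a)
  rw [integral_finsetSum _ fun i _ => (hFw2 i).integrable_sq,
    integral_finsetSum _ fun i _ => (hF2.eval i).integrable_sq,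
    integral_finsetSum _ fun i _ => (hw2.eval i).integrable_sq, mul_sum, ← sum_add_distrib]
  exact sum_congr rfl fun i _ => integral_add_mul_sq_of_condExp_eq_zero hm
    ((measurable_pi_apply i).comp hF).stronglyMeasurable (hF2.eval i) (hw2.eval i) (hwc i) a

end Orthogonality

-- The paper's `V = ‖(I - J) x‖²`, with `J = averagingMatrix N`.
noncomputable def consensusError {N : ℕ} (v : Fin N → ℝ) : ℝ :=
  ∑ i, ((1 - averagingMatrix N) *ᵥ v) i ^ 2

section ConsensusError

open averagingMatrix

variable {N : ℕ}

theorem consensusError_nonneg (v : Fin N → ℝ) : 0 ≤ consensusError v :=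
  sum_nonneg fun _ _ => sq_nonneg _

theorem consensusError_eq_sum_sq_sub_mean (v : Fin N → ℝ) :
    consensusError v = ∑ i, (v i - (∑ j, v j) / N) ^ 2 := by
  simp only [consensusError, one_sub_mulVec_apply]

theorem sq_sub_mean_le_consensusError (v : Fin N → ℝ) (i : Fin N) :
    (v i - (∑ j, v j) / N) ^ 2 ≤ consensusError v := by
  rw [consensusError_eq_sum_sq_sub_mean]
  exact single_le_sum (f := fun j => (v j - (∑ l, v l) / N) ^ 2) (fun j _ => sq_nonneg _)
    (mem_univ i)

variable {Ω : Type*} {m m₀ : MeasurableSpace Ω} {μ : Measure Ω} [IsFiniteMeasure μ]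

theorem integral_consensusError_step_le (hm : m ≤ m₀) {L : Matrix (Fin N) (Fin N) ℝ}
    {lam C a M : ℝ} (hL1 : L *ᵥ (fun _ => (1 : ℝ)) = 0)
    (hgap : ∀ v : Fin N → ℝ, ∑ i, v i = 0 → lam * ∑ i, v i ^ 2 ≤ v ⬝ᵥ L *ᵥ v)
    (hC : ∀ v : Fin N → ℝ, ∑ i, (L *ᵥ v) i ^ 2 ≤ C * ∑ i, v i ^ 2) (ha : 0 ≤ a)
    {x w : Ω → Fin N → ℝ} (hx : Measurable[m] x) (hx2 : MemLp x 2 μ) (hw2 : MemLp w 2 μ)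
    (hwc : ∀ i, μ[fun ω => w ω i | m] =ᵐ[μ] 0) (hwM : ∫ ω, ∑ i, w ω i ^ 2 ∂μ ≤ M) :
    ∫ ω, consensusError ((1 - a • L) *ᵥ x ω + a • w ω) ∂μ
      ≤ (1 - 2 * lam * a + C * a ^ 2) * ∫ ω, consensusError (x ω) ∂μ + a ^ 2 * M := by
  set F := fun ω => (1 - a • L) *ᵥ ((1 - averagingMatrix N) *ᵥ x ω)
  have hF : Measurable[m] F := by fun_prop
  have hF2 : MemLp F 2 μ := (hx2.matrix_mulVec _).matrix_mulVec _
  have hproject : ∀ ω, consensusError ((1 - a • L) *ᵥ x ω + a • w ω)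
      ≤ ∑ i, (F ω i + a * w ω i) ^ 2 := fun ω => by
    rw [consensusError, one_sub_mulVec_update hL1]
    refine (sum_sq_one_sub_mulVec_le (F ω + a • w ω)).trans_eq ?_
    simp only [Pi.add_apply, Pi.smul_apply, smul_eq_mul]
  have hcontract : ∀ ω, ∑ i, F ω i ^ 2 ≤ (1 - 2 * lam * a + C * a ^ 2) * consensusError (x ω) :=
    fun ω => sum_sq_one_sub_smul_mulVec_le ha (hgap _ (sum_one_sub_mulVec _)) (hC _)
  calc ∫ ω, consensusError ((1 - a • L) *ᵥ x ω + a • w ω) ∂μ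
      ≤ ∫ ω, ∑ i, (F ω i + a * w ω i) ^ 2 ∂μ :=
        integral_mono_of_nonneg (.of_forall fun _ => consensusError_nonneg _)
          (hF2.add (hw2.const_smul a)).integrable_sum_sq (.of_forall hproject)
    _ = ∫ ω, ∑ i, F ω i ^ 2 ∂μ + a ^ 2 * ∫ ω, ∑ i, w ω i ^ 2 ∂μ :=
        integral_sum_add_mul_sq_of_condExp_eq_zero hm hF hF2 hw2 hwc a
    _ ≤ (1 - 2 * lam * a + C * a ^ 2) * ∫ ω, consensusError (x ω) ∂μ + a ^ 2 * M := by
        refine add_le_add ?_ (mul_le_mul_of_nonneg_left hwM (sq_nonneg a))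
        rw [← integral_const_mul]
        exact integral_mono_of_nonneg (.of_forall fun _ => sum_nonneg fun _ _ => sq_nonneg _)
          ((hx2.matrix_mulVec _).integrable_sum_sq.const_mul _) (.of_forall hcontract)

end ConsensusError

theorem weak_consensus_general {N : ℕ}
    {Ω : Type*} {mΩ : MeasurableSpace Ω} (μ : MeasureTheory.Measure Ω) [MeasureTheory.IsProbabilityMeasure μ]
    (ℱ : MeasureTheory.Filtration ℕ mΩ)
    (L : Matrix (Fin N) (Fin N) ℝ)
    (hL1 : L.mulVec (fun _ => (1 : ℝ)) = 0)
    (lam : ℝ) (hlam : 0 < lam)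
    (hgap : ∀ v : Fin N → ℝ, (∑ i, v i) = 0 →
      lam * (∑ i, (v i) ^ 2) ≤ v ⬝ᵥ L.mulVec v)
    (α : ℕ → ℝ) (hα_pos : ∀ k, 0 < α k)
    (hα_div : Filter.Tendsto (fun n => ∑ k ∈ Finset.range n, α k) Filter.atTop Filter.atTop)
    (hα_sq : Summable (fun k => (α k) ^ 2))
    (M : ℝ) (hM : 0 ≤ M)
    (w : ℕ → Ω → Fin N → ℝ)
    (hw_L2 : ∀ k, MeasureTheory.MemLp (w k) 2 μ)
    (hw_cond : ∀ k i, μ[(fun ω => w k ω i) | ℱ k] =ᵐ[μ] 0)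
    (hw_bound : ∀ k, ∫ ω, (∑ i, (w k ω i) ^ 2) ∂μ ≤ M)
    (x : ℕ → Ω → Fin N → ℝ) (ξ : Fin N → ℝ) (hx0 : ∀ ω, x 0 ω = ξ)
    (hx_meas : ∀ k, Measurable[ℱ k] (x k))
    (hrec : ∀ k ω, x (k + 1) ω =
      ((1 : Matrix (Fin N) (Fin N) ℝ) - α k • L).mulVec (x k ω) + α k • w k ω) :
    Tendsto (fun k => ∫ ω, ∑ i, (x k ω i - (∑ j, x k ω j) / N) ^ 2 ∂μ)
        atTop (nhds 0) ∧
      ∀ i : Fin N,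
        Tendsto (fun k => ∫ ω, (x k ω i - (∑ j, x k ω j) / N) ^ 2 ∂μ)
          atTop (nhds 0) := by
  have hx2 : ∀ k, MemLp (x k) 2 μ := by
    intro k
    induction k with
    | zero => simpa only [funext hx0] using memLp_const ξ
    | succ k ih =>
      rw [funext (hrec k)]
      exact (ih.matrix_mulVec _).add ((hw_L2 k).const_smul (α k))
  set V := fun k => ∫ ω, consensusError (x k ω) ∂μ
  have hstep : ∀ k, V (k + 1)
      ≤ (1 - 2 * lam * α k + (∑ i, ∑ j, L i j ^ 2) * α k ^ 2) * V k + α k ^ 2 * M := fun k => by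
    simpa only [V, hrec] using integral_consensusError_step_le (ℱ.le k) hL1 hgap
      (sum_sq_mulVec_le L) (hα_pos k).le (hx_meas k) (hx2 k) (hw_L2 k) (hw_cond k) (hw_bound k)
  have hV : Tendsto V atTop (𝓝 0) :=
    tendsto_zero_of_le_one_sub_two_mul_add_sq hlam hM (fun k => (hα_pos k).le) hα_div hα_sq
      (fun k => integral_nonneg fun ω => consensusError_nonneg _) hstep
  refine ⟨by simpa only [V, consensusError_eq_sum_sq_sub_mean] using hV, fun i =>
    squeeze_zero (fun k => integral_nonneg fun _ => sq_nonneg _) (fun k => ?_) hV⟩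
  exact integral_mono_of_nonneg (.of_forall fun _ => sq_nonneg _)
    ((hx2 k).matrix_mulVec _).integrable_sum_sq
    (.of_forall fun ω => sq_sub_mean_le_consensusError (x k ω) i)

/-- Theorem 1 (weak consensus): under the over-the-air consensus protocol with a
connected expected topology and decreasing stepsizes, `E[V(k)] → 0`, and consequently
each agent's expected squared deviation from the current average tends to zero. -/
theorem weak_consensus {N : ℕ} (hN : 2 ≤ N)
    {Ω : Type*} {mΩ : MeasurableSpace Ω} (μ : MeasureTheory.Measure Ω) [MeasureTheory.IsProbabilityMeasure μ]
    (ℱ : MeasureTheory.Filtration ℕ mΩ)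
    (L : Matrix (Fin N) (Fin N) ℝ) (hLsymm : L.IsSymm)
    (hL1 : L.mulVec (fun _ => (1 : ℝ)) = 0)
    (lam : ℝ) (hlam : 0 < lam)
    (hgap : ∀ v : Fin N → ℝ, (∑ i, v i) = 0 →
      lam * (∑ i, (v i) ^ 2) ≤ v ⬝ᵥ L.mulVec v)
    (α : ℕ → ℝ) (hα_pos : ∀ k, 0 < α k)
    (hdiag : ∀ (i : Fin N) (k : ℕ), 0 < 1 - α k * L i i)
    (hα_div : Filter.Tendsto (fun n => ∑ k ∈ Finset.range n, α k) Filter.atTop Filter.atTop)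
    (hα_sq : Summable (fun k => (α k) ^ 2))
    (M : ℝ) (hM : 0 ≤ M)
    (w : ℕ → Ω → Fin N → ℝ)
    (hw_meas : ∀ k, Measurable[ℱ (k + 1)] (w k))
    (hw_L2 : ∀ k, MeasureTheory.MemLp (w k) 2 μ)
    (hw_cond : ∀ k i, μ[(fun ω => w k ω i) | ℱ k] =ᵐ[μ] 0)
    (hw_bound : ∀ k, ∫ ω, (∑ i, (w k ω i) ^ 2) ∂μ ≤ M)
    (x : ℕ → Ω → Fin N → ℝ) (ξ : Fin N → ℝ) (hx0 : ∀ ω, x 0 ω = ξ)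
    (hx_meas : ∀ k, Measurable[ℱ k] (x k))
    (hrec : ∀ k ω, x (k + 1) ω =
      ((1 : Matrix (Fin N) (Fin N) ℝ) - α k • L).mulVec (x k ω) + α k • w k ω) :
    Tendsto (fun k => ∫ ω, ∑ i, (x k ω i - (∑ j, x k ω j) / N) ^ 2 ∂μ)
        atTop (nhds 0) ∧
      ∀ i : Fin N,
        Tendsto (fun k => ∫ ω, (x k ω i - (∑ j, x k ω j) / N) ^ 2 ∂μ)
          atTop (nhds 0) :=
  weak_consensus_general μ ℱ L hL1 lam hlam hgap α hα_pos hα_div hα_sq M hM w hw_L2 hw_cond hw_bound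
    x ξ hx0 hx_meas hrec
end

section
/- Under the stated setting, suppose in addition that max_{i,j∈{1,…,N}} |α_i(k) − α_j(k)| = o(∑_{i=1}^N α_i(k)) as k → ∞ (condition (c)). Then lim_{k→∞} E[V(k)] = 0, i.e., the multi-agent system achieves weak consensus (Corollary 1). -/
/-!
Let `y = (I - J) x` be the disagreement vector. Since `L 𝟙 = 0`,
`y(k+1) = (I - J)(I - A(k) L) y(k) + (I - J) A(k) w(k)`, and the noise term is orthogonal in `L²`
to the `ℱ_k`-measurable first term. Splitting `A(k) = (s/N) I + (A(k) - (s/N) I)` with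
`s = ∑ᵢ αᵢ(k)`, the spectral gap gives
`‖(I - J)(I - A L) y‖² ≤ (1 - 2λs/N + (1 + C) d + C s²) ‖y‖²`, where `d` bounds `|αᵢ - αⱼ|` and
`C` bounds `‖L‖²`. As `d = o(s)` and `s → 0`, the factor is eventually at most `1 - λs/N`, so
`E V(k+1) ≤ (1 - λs/N) E V(k) + s² M`; with `∑ s = ∞` and `∑ s² < ∞` this recursion forces
`E V(k) → 0`.
-/

open MeasureTheory Filter Matrix Asymptotics

open Finset in
theorem le_prod_mul_add_sum_Ico_of_le_mul_add {v b e : ℕ → ℝ} {K n : ℕ}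
    (hb : ∀ k, K ≤ k → 0 ≤ b k ∧ b k ≤ 1) (he : ∀ k, 0 ≤ e k)
    (hrec : ∀ k, K ≤ k → v (k + 1) ≤ b k * v k + e k) (hn : K ≤ n) :
    v n ≤ (∏ k ∈ Ico K n, b k) * v K + ∑ k ∈ Ico K n, e k := by
  induction n, hn using Nat.le_induction with
  | base => simp
  | succ n hn ih =>
    obtain ⟨hb0, hb1⟩ := hb n hn
    have hE : 0 ≤ ∑ k ∈ Ico K n, e k := sum_nonneg fun k _ => he k
    rw [prod_Ico_succ_top hn, sum_Ico_succ_top hn]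
    calc v (n + 1) ≤ b n * v n + e n := hrec n hn
      _ ≤ b n * ((∏ k ∈ Ico K n, b k) * v K + ∑ k ∈ Ico K n, e k) + e n := by gcongr
      _ ≤ _ := by nlinarith

open Finset in
theorem tendsto_zero_of_le_one_sub_mul_add_s8 {v a e : ℕ → ℝ} (hv : ∀ k, 0 ≤ v k)
    (ha : ∀ᶠ k in atTop, 0 ≤ a k ∧ a k ≤ 1)
    (ha_sum : Tendsto (fun n => ∑ k ∈ range n, a k) atTop atTop)
    (he : ∀ k, 0 ≤ e k) (he_sum : Summable e)
    (hrec : ∀ᶠ k in atTop, v (k + 1) ≤ (1 - a k) * v k + e k) :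
    Tendsto v atTop (nhds 0) := by
  refine tendsto_order.2
    ⟨fun ε hε => .of_forall fun n => hε.trans_le (hv n), fun ε hε => ?_⟩
  obtain ⟨K₀, hK₀⟩ := eventually_atTop.1 (ha.and hrec)
  have htail : Tendsto (fun K => ∑' k, e k - ∑ k ∈ range K, e k) atTop (nhds 0) := by
    simpa using (tendsto_const_nhds (x := ∑' k, e k)).sub he_sum.hasSum.tendsto_sum_nat
  obtain ⟨K, hK, hK_tail⟩ :=
    ((eventually_ge_atTop K₀).and (htail.eventually (gt_mem_nhds (half_pos hε)))).exists
  have hunroll (n : ℕ) (hn : K ≤ n) : v n ≤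
      Real.exp (-∑ k ∈ Ico K n, a k) * v K + (∑' k, e k - ∑ k ∈ range K, e k) := by
    have hK' (k : ℕ) (hk : K ≤ k) := hK₀ k (hK.trans hk)
    have hprod : ∏ k ∈ Ico K n, (1 - a k) ≤ Real.exp (-∑ k ∈ Ico K n, a k) := by
      rw [← sum_neg_distrib, Real.exp_sum]
      exact prod_le_prod (fun k hk => by linarith [(hK' k (mem_Ico.1 hk).1).1.2])
        fun k _ => Real.one_sub_le_exp_neg _
    have htail_le : ∑ k ∈ Ico K n, e k ≤ ∑' k, e k - ∑ k ∈ range K, e k := by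
      rw [sum_Ico_eq_sub _ hn]
      linarith [he_sum.sum_le_tsum (range n) fun k _ => he k]
    calc v n ≤ (∏ k ∈ Ico K n, (1 - a k)) * v K + ∑ k ∈ Ico K n, e k :=
          le_prod_mul_add_sum_Ico_of_le_mul_add
            (fun k hk => ⟨by linarith [(hK' k hk).1.2], by linarith [(hK' k hk).1.1]⟩) he
            (fun k hk => (hK' k hk).2) hn
      _ ≤ _ := by gcongr; exact hv K
  have ha_Ico : Tendsto (fun n => ∑ k ∈ Ico K n, a k) atTop atTop :=
    (tendsto_atTop_add_const_right _ (-∑ k ∈ range K, a k) ha_sum).congr'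
      (by filter_upwards [eventually_ge_atTop K] with n hn; rw [sum_Ico_eq_sub _ hn]; ring)
  have hexp : Tendsto (fun n => Real.exp (-∑ k ∈ Ico K n, a k) * v K) atTop (nhds 0) := by
    simpa using (Real.tendsto_exp_atBot.comp (tendsto_neg_atTop_atBot.comp ha_Ico)).mul_const (v K)
  filter_upwards [hexp.eventually (gt_mem_nhds (half_pos hε)), eventually_ge_atTop K]
    with n hn_exp hn
  linarith [hunroll n hn]

theorem tendsto_zero_of_summable_sq {f : ℕ → ℝ} (hf : Summable fun k => f k ^ 2) :
    Tendsto f atTop (nhds 0) := by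
  rw [tendsto_zero_iff_abs_tendsto_zero]
  simpa [Function.comp_def, Real.sqrt_sq_eq_abs] using hf.tendsto_atTop_zero.sqrt

theorem summable_sq_sum_of_summable_sq {ι : Type*} [Fintype ι] {f : ι → ℕ → ℝ}
    (hf : ∀ i, Summable fun k => f i k ^ 2) : Summable fun k => (∑ i, f i k) ^ 2 :=
  .of_nonneg_of_le (fun _ => sq_nonneg _) (fun _ => sq_sum_le_card_mul_sum_sq)
    ((summable_sum fun i _ => hf i).mul_left _)

theorem eventually_mul_add_mul_sq_le_of_isLittleO {α : Type*} {l : Filter α} {d s : α → ℝ}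
    (hd : d =o[l] s) (hs : Tendsto s l (nhds 0)) (hs0 : ∀ k, 0 ≤ s k) {c : ℝ} (hc : 0 < c)
    (A B : ℝ) : ∀ᶠ k in l, A * d k + B * s k ^ 2 ≤ c * s k := by
  have hε : 0 < c / (2 * (|A| + 1)) := by positivity
  have hδ : 0 < c / (2 * (|B| + 1)) := by positivity
  filter_upwards [hd.bound hε, hs.eventually (gt_mem_nhds hδ)] with k hdk hsk
  have hsk0 := hs0 k
  rw [Real.norm_eq_abs, Real.norm_eq_abs, abs_of_nonneg hsk0] at hdk
  have hA : A * d k ≤ c / 2 * s k := calc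
    A * d k ≤ |A| * |d k| := (le_abs_self _).trans (abs_mul _ _).le
    _ ≤ (|A| + 1) * (c / (2 * (|A| + 1)) * s k) := by gcongr; linarith [abs_nonneg A]
    _ = c / 2 * s k := by field_simp
  have hB : B * s k ^ 2 ≤ c / 2 * s k := calc
    B * s k ^ 2 ≤ (|B| + 1) * s k * s k := by
      nlinarith [le_abs_self B, sq_nonneg (s k)]
    _ ≤ (|B| + 1) * (c / (2 * (|B| + 1))) * s k := by gcongr
    _ = c / 2 * s k := by field_simp
  linarith

theorem tendsto_zero_of_stepsize_recursion {V s d : ℕ → ℝ} {c A B M : ℝ} (hc : 0 < c)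
    (hM : 0 ≤ M) (hV : ∀ k, 0 ≤ V k) (hs0 : ∀ k, 0 ≤ s k)
    (hs_sum : Tendsto (fun n => ∑ k ∈ Finset.range n, s k) atTop atTop)
    (hs_sq : Summable fun k => s k ^ 2) (hd : d =o[atTop] s)
    (hrec : ∀ k, V (k + 1) ≤ (1 - 2 * c * s k + A * d k + B * s k ^ 2) * V k + s k ^ 2 * M) :
    Tendsto V atTop (nhds 0) := by
  have hs := tendsto_zero_of_summable_sq hs_sq
  refine tendsto_zero_of_le_one_sub_mul_add_s8 (a := fun k => c * s k) hV ?_ ?_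
    (fun k => mul_nonneg (sq_nonneg _) hM) (hs_sq.mul_right M) ?_
  · filter_upwards [hs.eventually (ge_mem_nhds (inv_pos.2 hc))] with k hk
    refine ⟨mul_nonneg hc.le (hs0 k), ?_⟩
    calc c * s k ≤ c * c⁻¹ := by gcongr
      _ = 1 := mul_inv_cancel₀ hc.ne'
  · simpa [Finset.mul_sum] using hs_sum.const_mul_atTop hc
  · filter_upwards [eventually_mul_add_mul_sq_le_of_isLittleO hd hs hs0 hc A B] with k hk
    refine (hrec k).trans (add_le_add_left (mul_le_mul_of_nonneg_right ?_ (hV k)) _)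
    linarith

section SumOfSquares

variable {ι : Type*} [Fintype ι]

theorem sum_sq_sub_eq (y u : ι → ℝ) :
    ∑ i, (y - u) i ^ 2 = ∑ i, y i ^ 2 - 2 * (y ⬝ᵥ u) + ∑ i, u i ^ 2 := by
  simp only [Pi.sub_apply, sub_sq, dotProduct, Finset.sum_add_distrib, Finset.sum_sub_distrib,
    Finset.mul_sum, mul_assoc]

theorem sum_sq_diagonal_mulVec_le [DecidableEq ι] {a : ι → ℝ} (ha : ∀ i, 0 ≤ a i)
    (u : ι → ℝ) :
    ∑ i, (diagonal a *ᵥ u) i ^ 2 ≤ (∑ i, a i) ^ 2 * ∑ i, u i ^ 2 := by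
  rw [Finset.mul_sum]
  refine Finset.sum_le_sum fun i _ => ?_
  rw [mulVec_diagonal, mul_pow]
  have : a i ≤ ∑ j, a j := Finset.single_le_sum (fun j _ => ha j) (Finset.mem_univ i)
  gcongr
  exact ha i

theorem exists_sum_sq_mulVec_le {κ : Type*} [Fintype κ] (L : Matrix ι κ ℝ) :
    ∃ C, ∀ v : κ → ℝ, ∑ i, (L *ᵥ v) i ^ 2 ≤ C * ∑ j, v j ^ 2 := by
  refine ⟨∑ i, ∑ j, L i j ^ 2, fun v => ?_⟩
  rw [Finset.sum_mul]
  exact Finset.sum_le_sum fun i _ => Finset.sum_mul_sq_le_sq_mul_sq _ (L i) v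

end SumOfSquares

noncomputable def centeringMatrix (N : ℕ) : Matrix (Fin N) (Fin N) ℝ :=
  1 - (N : ℝ)⁻¹ • Matrix.of fun _ _ => 1

namespace centeringMatrix

variable {N : ℕ}

theorem mulVec_apply (v : Fin N → ℝ) (i : Fin N) :
    (centeringMatrix N *ᵥ v) i = v i - (∑ j, v j) / N := by
  rw [centeringMatrix, sub_mulVec, one_mulVec, smul_mulVec]
  simp [mulVec, dotProduct, div_eq_inv_mul]

theorem sum_mulVec [NeZero N] (v : Fin N → ℝ) : ∑ i, (centeringMatrix N *ᵥ v) i = 0 := by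
  simp [mulVec_apply, Finset.sum_sub_distrib, mul_div_cancel₀ _ (NeZero.ne (N : ℝ))]

theorem dotProduct_mulVec_of_sum_eq_zero {y : Fin N → ℝ} (hy : ∑ i, y i = 0)
    (v : Fin N → ℝ) : y ⬝ᵥ (centeringMatrix N *ᵥ v) = y ⬝ᵥ v := by
  simp [dotProduct, mulVec_apply, mul_sub, ← Finset.sum_mul, hy]

theorem mulVec_mulVec_of_mulVec_one {L : Matrix (Fin N) (Fin N) ℝ}
    (hL : L *ᵥ (fun _ => 1) = 0) (v : Fin N → ℝ) :
    L *ᵥ (centeringMatrix N *ᵥ v) = L *ᵥ v := by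
  have : centeringMatrix N *ᵥ v = v - ((∑ j, v j) / N) • fun _ => 1 := by
    ext i; simp [mulVec_apply]
  rw [this, mulVec_sub, mulVec_smul, hL, smul_zero, sub_zero]

theorem sum_sq_mulVec_le (v : Fin N → ℝ) :
    ∑ i, (centeringMatrix N *ᵥ v) i ^ 2 ≤ ∑ i, v i ^ 2 := by
  rcases Nat.eq_zero_or_pos N with rfl | hN
  · simp
  have : NeZero N := ⟨hN.ne'⟩
  calc ∑ i, (centeringMatrix N *ᵥ v) i ^ 2
      = ∑ i, v i ^ 2 - (∑ j, v j) ^ 2 / N := by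
        simp only [mulVec_apply, sub_sq, Finset.sum_add_distrib, Finset.sum_sub_distrib,
          ← Finset.sum_mul, ← Finset.mul_sum, Finset.sum_const, Finset.card_univ,
          Fintype.card_fin, nsmul_eq_mul]
        field_simp
        ring
    _ ≤ ∑ i, v i ^ 2 := sub_le_self _ (by positivity)

end centeringMatrix

section StepEstimate

variable {N : ℕ}

theorem abs_sub_sum_div_le [NeZero N] {a : Fin N → ℝ} {d : ℝ}
    (hd : ∀ i j, |a i - a j| ≤ d) (i : Fin N) : |a i - (∑ j, a j) / N| ≤ d := by
  have hN : (0 : ℝ) < N := by simp [Nat.pos_of_neZero]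
  have : a i - (∑ j, a j) / N = (∑ j, (a i - a j)) / N := by
    field_simp
    simp [Finset.sum_sub_distrib, mul_comm]
  rw [this, abs_div, abs_of_pos hN, div_le_iff₀ hN]
  calc |∑ j, (a i - a j)| ≤ ∑ j, |a i - a j| := Finset.abs_sum_le_sum_abs _ _
    _ ≤ ∑ _j : Fin N, d := Finset.sum_le_sum fun j _ => hd i j
    _ = d * N := by simp [mul_comm]

theorem sum_div_mul_dotProduct_sub_le_dotProduct_diagonal_mulVec [NeZero N] {a : Fin N → ℝ}
    {d : ℝ} (hd : ∀ i j, |a i - a j| ≤ d) (y u : Fin N → ℝ) :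
    (∑ i, a i) / N * (y ⬝ᵥ u) - d / 2 * (∑ i, y i ^ 2 + ∑ i, u i ^ 2) ≤
      y ⬝ᵥ (diagonal a *ᵥ u) := by
  have hterm (i : Fin N) : (∑ j, a j) / N * (y i * u i) - d / 2 * (y i ^ 2 + u i ^ 2) ≤
      y i * (a i * u i) := by
    obtain ⟨hlo, hhi⟩ := abs_le.1 (abs_sub_sum_div_le hd i)
    nlinarith [mul_nonneg (neg_le_iff_add_nonneg.1 hlo) (sq_nonneg (y i + u i)),
      mul_nonneg (sub_nonneg.2 hhi) (sq_nonneg (y i - u i))]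
  simpa [dotProduct, mulVec_diagonal, Finset.mul_sum, ← Finset.sum_add_distrib,
    ← Finset.sum_sub_distrib, mul_add] using Finset.sum_le_sum fun i _ => hterm i

theorem sum_sq_sub_centeringMatrix_mulVec_diagonal_le [NeZero N]
    {L : Matrix (Fin N) (Fin N) ℝ} {lam C : ℝ} {a : Fin N → ℝ} {d : ℝ} {y : Fin N → ℝ}
    (hy : ∑ i, y i = 0) (hgap : lam * ∑ i, y i ^ 2 ≤ y ⬝ᵥ L *ᵥ y)
    (hC : ∑ i, (L *ᵥ y) i ^ 2 ≤ C * ∑ i, y i ^ 2)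
    (ha : ∀ i, 0 ≤ a i) (hd : ∀ i j, |a i - a j| ≤ d) :
    ∑ i, (y - centeringMatrix N *ᵥ (diagonal a *ᵥ (L *ᵥ y))) i ^ 2 ≤
      (1 - 2 * (lam / N) * ∑ i, a i + (1 + C) * d + C * (∑ i, a i) ^ 2) * ∑ i, y i ^ 2 := by
  set s := ∑ i, a i
  have hs : 0 ≤ s := Finset.sum_nonneg fun i _ => ha i
  have hd0 : 0 ≤ d := (abs_nonneg _).trans (hd 0 0)
  have hcross := sum_div_mul_dotProduct_sub_le_dotProduct_diagonal_mulVec hd y (L *ᵥ y)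
  have hproj := (centeringMatrix.sum_sq_mulVec_le (diagonal a *ᵥ (L *ᵥ y))).trans
    (sum_sq_diagonal_mulVec_le ha (L *ᵥ y))
  rw [sum_sq_sub_eq, centeringMatrix.dotProduct_mulVec_of_sum_eq_zero hy]
  have hgap' : s / N * (lam * ∑ i, y i ^ 2) ≤ s / N * (y ⬝ᵥ L *ᵥ y) := by gcongr
  have hC' : d / 2 * ∑ i, (L *ᵥ y) i ^ 2 ≤ d / 2 * (C * ∑ i, y i ^ 2) := by gcongr
  have hC'' : s ^ 2 * ∑ i, (L *ᵥ y) i ^ 2 ≤ s ^ 2 * (C * ∑ i, y i ^ 2) := by gcongr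
  have hρ : 2 * (lam / N) * s = 2 * (s / N * lam) := by ring
  rw [hρ]
  linarith

end StepEstimate

section RandomVectors

variable {Ω ι κ : Type*} {mΩ : MeasurableSpace Ω} {μ : Measure Ω}

theorem MeasureTheory.MemLp.matrix_mulVec_s8 [Fintype ι] [Fintype κ] {p : ENNReal}
    {X : Ω → κ → ℝ} (hX : MemLp X p μ) (B : Matrix ι κ ℝ) :
    MemLp (fun ω => B *ᵥ X ω) p μ :=
  (Matrix.mulVecLin B).toContinuousLinearMap.comp_memLp' hX

theorem MeasureTheory.MemLp.integrable_sum_sq_s8 [Fintype ι] {X : Ω → ι → ℝ}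
    (hX : MemLp X 2 μ) :
    Integrable (fun ω => ∑ i, X ω i ^ 2) μ :=
  integrable_finsetSum _ fun i _ => (hX.eval i).integrable_sq

theorem integral_mul_eq_zero_of_condExp_ae_eq_zero [IsFiniteMeasure μ] {m : MeasurableSpace Ω}
    (hm : m ≤ mΩ) {g h : Ω → ℝ} (hgm : StronglyMeasurable[m] g) (hg : MemLp g 2 μ)
    (hh : MemLp h 2 μ) (hh_cond : μ[h | m] =ᵐ[μ] 0) : ∫ ω, g ω * h ω ∂μ = 0 := by
  have hgh : Integrable (g * h) μ := hg.integrable_mul hh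
  calc ∫ ω, g ω * h ω ∂μ = ∫ ω, μ[g * h | m] ω ∂μ := (integral_condExp hm).symm
    _ = ∫ ω, (g * 0 : Ω → ℝ) ω ∂μ := integral_congr_ae <|
      (condExp_mul_of_stronglyMeasurable_left hgm hgh (hh.integrable one_le_two)).trans
        ((EventuallyEq.refl _ g).mul hh_cond)
    _ = 0 := by simp

theorem condExp_mulVec_apply_ae_eq_zero [Fintype κ] {m : MeasurableSpace Ω}
    {W : Ω → κ → ℝ} (hW : ∀ j, Integrable (fun ω => W ω j) μ)
    (hW_cond : ∀ j, μ[fun ω => W ω j | m] =ᵐ[μ] 0)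
    (B : Matrix ι κ ℝ) (i : ι) : μ[fun ω => (B *ᵥ W ω) i | m] =ᵐ[μ] 0 := by
  have hsum : (fun ω => (B *ᵥ W ω) i) = ∑ j, B i j • fun ω => W ω j := by
    ext ω; simp [mulVec, dotProduct]
  rw [hsum]
  refine (condExp_finsetSum (fun j _ => (hW j).smul (B i j)) m).trans ?_
  filter_upwards [ae_all_iff.2 fun j => (condExp_smul (B i j) (fun ω => W ω j) m).trans
    ((hW_cond j).const_smul (B i j))] with ω hω
  simp [hω]

theorem integral_sum_sq_add_of_condExp_ae_eq_zero [Fintype ι] [IsFiniteMeasure μ]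
    {m : MeasurableSpace Ω} (hm : m ≤ mΩ) {Y Z : Ω → ι → ℝ} (hYm : Measurable[m] Y)
    (hY : MemLp Y 2 μ) (hZ : MemLp Z 2 μ) (hZ_cond : ∀ i, μ[fun ω => Z ω i | m] =ᵐ[μ] 0) :
    ∫ ω, ∑ i, (Y ω + Z ω) i ^ 2 ∂μ =
      ∫ ω, ∑ i, Y ω i ^ 2 ∂μ + ∫ ω, ∑ i, Z ω i ^ 2 ∂μ := by
  have hYZ (i : ι) : Integrable (fun ω => 2 * (Y ω i * Z ω i)) μ :=
    ((hY.eval i).integrable_mul (hZ.eval i)).const_mul 2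
  have hY2 := hY.integrable_sum_sq_s8
  have hZ2 := hZ.integrable_sum_sq_s8
  have hcross (i : ι) : ∫ ω, 2 * (Y ω i * Z ω i) ∂μ = 0 := by
    rw [integral_const_mul, integral_mul_eq_zero_of_condExp_ae_eq_zero (g := fun ω => Y ω i) hm
      (measurable_pi_apply i |>.comp hYm).stronglyMeasurable (hY.eval i) (hZ.eval i)
      (hZ_cond i), mul_zero]
  have hexpand (ω : Ω) : ∑ i, (Y ω + Z ω) i ^ 2 =
      ∑ i, Y ω i ^ 2 + ∑ i, Z ω i ^ 2 + ∑ i, 2 * (Y ω i * Z ω i) := by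
    simp only [Pi.add_apply, add_sq, ← Finset.sum_add_distrib]
    exact Finset.sum_congr rfl fun i _ => by ring
  simp only [hexpand]
  rw [integral_add (by exact hY2.add hZ2) (integrable_finsetSum _ fun i _ => hYZ i),
    integral_add hY2 hZ2, integral_finsetSum _ fun i _ => hYZ i]
  simp [hcross]

theorem memLp_of_eq_mulVec_add_mulVec [Fintype ι] [Fintype κ] {p : ENNReal}
    {X : ℕ → Ω → ι → ℝ} {W : ℕ → Ω → κ → ℝ} {A : ℕ → Matrix ι ι ℝ}
    {B : ℕ → Matrix ι κ ℝ} (hX0 : MemLp (X 0) p μ) (hW : ∀ k, MemLp (W k) p μ)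
    (hrec : ∀ k ω, X (k + 1) ω = A k *ᵥ X k ω + B k *ᵥ W k ω) (k : ℕ) :
    MemLp (X k) p μ := by
  induction k with
  | zero => exact hX0
  | succ k ih =>
    rw [funext (hrec k)]
    exact (ih.matrix_mulVec_s8 (A k)).add ((hW k).matrix_mulVec_s8 (B k))

end RandomVectors

theorem integral_sum_sq_centeringMatrix_mulVec_step_le {Ω : Type*} {mΩ : MeasurableSpace Ω}
    {μ : Measure Ω} [IsFiniteMeasure μ] {N : ℕ} [NeZero N] {m : MeasurableSpace Ω}
    (hm : m ≤ mΩ) {L : Matrix (Fin N) (Fin N) ℝ} (hL1 : L *ᵥ (fun _ => 1) = 0) {lam C : ℝ}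
    (hgap : ∀ v : Fin N → ℝ, ∑ i, v i = 0 → lam * ∑ i, v i ^ 2 ≤ v ⬝ᵥ L *ᵥ v)
    (hC : ∀ v : Fin N → ℝ, ∑ i, (L *ᵥ v) i ^ 2 ≤ C * ∑ i, v i ^ 2)
    {a : Fin N → ℝ} (ha : ∀ i, 0 ≤ a i) {d : ℝ} (hd : ∀ i j, |a i - a j| ≤ d)
    {X W : Ω → Fin N → ℝ} (hXm : Measurable[m] X) (hX : MemLp X 2 μ) (hW : MemLp W 2 μ)
    (hW_cond : ∀ i, μ[fun ω => W ω i | m] =ᵐ[μ] 0) {X' : Ω → Fin N → ℝ}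
    (hX' : ∀ ω, X' ω = (1 - diagonal a * L) *ᵥ X ω + diagonal a *ᵥ W ω) :
    ∫ ω, ∑ i, (centeringMatrix N *ᵥ X' ω) i ^ 2 ∂μ ≤
      (1 - 2 * (lam / N) * ∑ i, a i + (1 + C) * d + C * (∑ i, a i) ^ 2) *
          ∫ ω, ∑ i, (centeringMatrix N *ᵥ X ω) i ^ 2 ∂μ +
        (∑ i, a i) ^ 2 * ∫ ω, ∑ i, W ω i ^ 2 ∂μ := by
  set P := centeringMatrix N
  set D := diagonal a
  have hsplit (ω : Ω) : P *ᵥ ((1 - D * L) *ᵥ X ω + D *ᵥ W ω) =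
      (P * (1 - D * L)) *ᵥ X ω + (P * D) *ᵥ W ω := by
    simp only [mulVec_add, mulVec_mulVec]
  have hdrift (x : Fin N → ℝ) :
      (P * (1 - D * L)) *ᵥ x = P *ᵥ x - P *ᵥ (D *ᵥ (L *ᵥ (P *ᵥ x))) := by
    rw [← mulVec_mulVec, sub_mulVec, one_mulVec, mulVec_sub, mulVec_mulVec,
      centeringMatrix.mulVec_mulVec_of_mulVec_one hL1, ← mulVec_mulVec, ← mulVec_mulVec]
  simp only [hX', hsplit]
  rw [integral_sum_sq_add_of_condExp_ae_eq_zero (Y := fun ω => (P * (1 - D * L)) *ᵥ X ω)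
    (Z := fun ω => (P * D) *ᵥ W ω) hm
    ((P * (1 - D * L)).mulVecLin.continuous_of_finiteDimensional.measurable.comp hXm)
    (hX.matrix_mulVec_s8 _) (hW.matrix_mulVec_s8 _)
    (condExp_mulVec_apply_ae_eq_zero (fun j => (hW.eval j).integrable one_le_two) hW_cond _)]
  gcongr ?_ + ?_
  · rw [← integral_const_mul]
    refine integral_mono ((hX.matrix_mulVec_s8 _).integrable_sum_sq_s8)
      ((hX.matrix_mulVec_s8 _).integrable_sum_sq_s8.const_mul _) fun ω => ?_
    rw [hdrift]
    exact sum_sq_sub_centeringMatrix_mulVec_diagonal_le (centeringMatrix.sum_mulVec _)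
      (hgap _ (centeringMatrix.sum_mulVec _)) (hC _) ha hd
  · rw [← integral_const_mul]
    refine integral_mono ((hW.matrix_mulVec_s8 _).integrable_sum_sq_s8)
      (hW.integrable_sum_sq_s8.const_mul _) fun ω => ?_
    rw [← mulVec_mulVec]
    exact (centeringMatrix.sum_sq_mulVec_le _).trans (sum_sq_diagonal_mulVec_le ha _)

theorem weak_consensus_heterogeneous_stepsizes_general {N : ℕ} (hN : 2 ≤ N)
    {Ω : Type*} {mΩ : MeasurableSpace Ω} (μ : MeasureTheory.Measure Ω) [MeasureTheory.IsProbabilityMeasure μ]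
    (ℱ : MeasureTheory.Filtration ℕ mΩ)
    (L : Matrix (Fin N) (Fin N) ℝ)
    (hL1 : L.mulVec (fun _ => (1 : ℝ)) = 0)
    (lam : ℝ) (hlam : 0 < lam)
    (hgap : ∀ v : Fin N → ℝ, (∑ i, v i) = 0 →
      lam * (∑ i, (v i) ^ 2) ≤ v ⬝ᵥ L.mulVec v)
    (α : Fin N → ℕ → ℝ) (hα_pos : ∀ i k, 0 < α i k)
    (hα_div : ∀ i, Filter.Tendsto (fun n => ∑ k ∈ Finset.range n, α i k) Filter.atTop Filter.atTop)
    (hα_sq : ∀ i, Summable (fun k => (α i k) ^ 2))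
    (M : ℝ) (hM : 0 ≤ M)
    (w : ℕ → Ω → Fin N → ℝ)
    (hw_L2 : ∀ k, MeasureTheory.MemLp (w k) 2 μ)
    (hw_cond : ∀ k i, μ[(fun ω => w k ω i) | ℱ k] =ᵐ[μ] 0)
    (hw_bound : ∀ k, ∫ ω, (∑ i, (w k ω i) ^ 2) ∂μ ≤ M)
    (x : ℕ → Ω → Fin N → ℝ) (ξ : Fin N → ℝ) (hx0 : ∀ ω, x 0 ω = ξ)
    (hx_meas : ∀ k, Measurable[ℱ k] (x k))
    (hrec : ∀ k ω, x (k + 1) ω =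
      ((1 : Matrix (Fin N) (Fin N) ℝ)
          - (Matrix.diagonal fun i => α i k) * L).mulVec (x k ω)
        + (Matrix.diagonal fun i => α i k).mulVec (w k ω))
    (hα_close : (fun k => ⨆ i : Fin N, ⨆ j : Fin N, |α i k - α j k|)
      =o[Filter.atTop] fun k => ∑ i, α i k) :
    Tendsto (fun k => ∫ ω, ∑ i, (x k ω i - (∑ j, x k ω j) / N) ^ 2 ∂μ)
      atTop (nhds 0) := by
  have : NeZero N := ⟨by omega⟩
  obtain ⟨C, hC⟩ := exists_sum_sq_mulVec_le L
  have hx := memLp_of_eq_mulVec_add_mulVec (by rw [funext hx0]; exact memLp_const ξ) hw_L2 hrec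
  have hd (k : ℕ) (i j : Fin N) :
      |α i k - α j k| ≤ ⨆ i : Fin N, ⨆ j : Fin N, |α i k - α j k| :=
    le_ciSup_of_le (Finite.bddAbove_range _) i
      (le_ciSup (Finite.bddAbove_range fun j => |α i k - α j k|) j)
  obtain ⟨i₀⟩ : Nonempty (Fin N) := inferInstance
  simp only [← centeringMatrix.mulVec_apply]
  refine tendsto_zero_of_stepsize_recursion (c := lam / N) (A := 1 + C) (B := C) (by positivity) hM
    (fun k => integral_nonneg fun ω => by positivity)
    (fun k => Finset.sum_nonneg fun i _ => (hα_pos i k).le)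
    (tendsto_atTop_mono (fun n => Finset.sum_le_sum fun k _ =>
      Finset.single_le_sum (fun i _ => (hα_pos i k).le) (Finset.mem_univ i₀)) (hα_div i₀))
    (summable_sq_sum_of_summable_sq hα_sq) hα_close fun k => ?_
  have hstep := integral_sum_sq_centeringMatrix_mulVec_step_le (ℱ.le k) hL1 hgap hC
    (fun i => (hα_pos i k).le) (hd k) (hx_meas k) (hx k) (hw_L2 k) (hw_cond k) (hrec k)
  exact hstep.trans (add_le_add_right (mul_le_mul_of_nonneg_left (hw_bound k) (sq_nonneg _)) _)

/-- Corollary 1 (weak consensus with heterogeneous stepsizes): if the agents' stepsizes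
additionally satisfy `max_{i,j} |αᵢ(k) − αⱼ(k)| = o(∑ᵢ αᵢ(k))`, then `E[V(k)] → 0`. -/
theorem weak_consensus_heterogeneous_stepsizes {N : ℕ} (hN : 2 ≤ N)
    {Ω : Type*} {mΩ : MeasurableSpace Ω} (μ : MeasureTheory.Measure Ω) [MeasureTheory.IsProbabilityMeasure μ]
    (ℱ : MeasureTheory.Filtration ℕ mΩ)
    (L : Matrix (Fin N) (Fin N) ℝ) (hLsymm : L.IsSymm)
    (hL1 : L.mulVec (fun _ => (1 : ℝ)) = 0)
    (hLoffdiag : ∀ i j, i ≠ j → L i j ≤ 0)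
    (lam : ℝ) (hlam : 0 < lam)
    (hgap : ∀ v : Fin N → ℝ, (∑ i, v i) = 0 →
      lam * (∑ i, (v i) ^ 2) ≤ v ⬝ᵥ L.mulVec v)
    (α : Fin N → ℕ → ℝ) (hα_pos : ∀ i k, 0 < α i k)
    (hα_div : ∀ i, Filter.Tendsto (fun n => ∑ k ∈ Finset.range n, α i k) Filter.atTop Filter.atTop)
    (hα_sq : ∀ i, Summable (fun k => (α i k) ^ 2))
    (hdiag : ∀ (i : Fin N) (k : ℕ), 0 < 1 - α i k * L i i)
    (M : ℝ) (hM : 0 ≤ M)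
    (w : ℕ → Ω → Fin N → ℝ)
    (hw_meas : ∀ k, Measurable[ℱ (k + 1)] (w k))
    (hw_L2 : ∀ k, MeasureTheory.MemLp (w k) 2 μ)
    (hw_cond : ∀ k i, μ[(fun ω => w k ω i) | ℱ k] =ᵐ[μ] 0)
    (hw_bound : ∀ k, ∫ ω, (∑ i, (w k ω i) ^ 2) ∂μ ≤ M)
    (x : ℕ → Ω → Fin N → ℝ) (ξ : Fin N → ℝ) (hx0 : ∀ ω, x 0 ω = ξ)
    (hx_meas : ∀ k, Measurable[ℱ k] (x k))
    (hrec : ∀ k ω, x (k + 1) ω =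
      ((1 : Matrix (Fin N) (Fin N) ℝ)
          - (Matrix.diagonal fun i => α i k) * L).mulVec (x k ω)
        + (Matrix.diagonal fun i => α i k).mulVec (w k ω))
    (hα_close : (fun k => ⨆ i : Fin N, ⨆ j : Fin N, |α i k - α j k|)
      =o[Filter.atTop] fun k => ∑ i, α i k) :
    Tendsto (fun k => ∫ ω, ∑ i, (x k ω i - (∑ j, x k ω j) / N) ^ 2 ∂μ)
      atTop (nhds 0) :=
  weak_consensus_heterogeneous_stepsizes_general hN μ ℱ L hL1 lam hlam hgap α hα_pos hα_div hα_sq M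
    hM w hw_L2 hw_cond hw_bound x ξ hx0 hx_meas hrec hα_close
end
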